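/- arXiv:2007.06326 — 6 statements merged into one kernel-verified Lean document; each statement's English description precedes it below -/
import Mathlib

section
/- Let V be a finite-dimensional real inner product space with dim V ≥ 2, let W be a nonzero proper linear subspace of V, and let x̄, ȳ ∈ P(V) with x̄, ȳ ∉ P(W^⊥). Then d(P_W x̄, P_W ȳ) ≤ d(x̄, P(W^⊥))^{-1} · d(ȳ, P(W^⊥))^{-1} · d(x̄, ȳ). -/
open scoped RealInnerProductSpace
open Filter

variable {V : Type*} [NormedAddCommGroup V] [InnerProductSpace ℝ V]

/-- The projective distance between the lines spanned by two nonzero vectors: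
`d(x̄, ȳ) = (1 − ⟨x,y⟫²/(|x|²|y|²))^{1/2}`. -/
noncomputable def projDist (x y : V) : ℝ :=
  Real.sqrt (1 - ⟪x, y⟫ ^ 2 / (‖x‖ ^ 2 * ‖y‖ ^ 2))

/-- The distance `d(x̄, P(W))` from the line spanned by `x` to the projective space of the
submodule `W`. -/
noncomputable def projDistToSub (x : V) (W : Submodule ℝ V) : ℝ :=
  sInf {r : ℝ | ∃ y : V, y ∈ W ∧ y ≠ 0 ∧ r = projDist x y}

/-- `κ(E₀,…,E_s)`: the minimal projective distance between nonzero vectors lying in sums of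
disjoint subfamilies of the `E i`. -/
noncomputable def kappa {ι : Type*} (E : ι → Submodule ℝ V) : ℝ :=
  sInf {r : ℝ | ∃ (I J : Finset ι) (x y : V), I.Nonempty ∧ J.Nonempty ∧ Disjoint I J ∧
    x ∈ (⨆ i ∈ I, E i) ∧ x ≠ 0 ∧ y ∈ (⨆ j ∈ J, E j) ∧ y ≠ 0 ∧ r = projDist x y}

/-- `Vⁱ = E_{i+1} ⊕ ⋯ ⊕ E_s`. -/
noncomputable def Vlow {s : ℕ} (E : Fin (s+1) → Submodule ℝ V) (i : ℕ) : Submodule ℝ V :=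
  ⨆ j : Fin (s+1), ⨆ _ : i < (j : ℕ), E j

/-- `Wⁱ = E₀ ⊕ ⋯ ⊕ E_i`. -/
noncomputable def Whigh {s : ℕ} (E : Fin (s+1) → Submodule ℝ V) (i : ℕ) : Submodule ℝ V :=
  ⨆ j : Fin (s+1), ⨆ _ : (j : ℕ) ≤ i, E j

/-- `‖x ∧ y‖ = (|x|²|y|² − ⟨x,y⟫²)^{1/2}`, the area of the parallelogram spanned by `x, y`. -/
noncomputable def wedgeNorm (x y : V) : ℝ :=
  Real.sqrt (‖x‖ ^ 2 * ‖y‖ ^ 2 - ⟪x, y⟫ ^ 2)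

/-!
Write `d(x̄, ȳ) = ‖x ∧ y‖ / (‖x‖ ‖y‖)`. The distance from `x̄` to `P(W^⊥)` is `‖P_W x‖ / ‖x‖`:
for `y ∈ W^⊥` only the component `x - P_W x` of `x` pairs with `y`, and Cauchy–Schwarz for that
pairing is sharp. The inequality therefore reduces to `‖P_W x ∧ P_W y‖ ≤ ‖x ∧ y‖`, i.e. orthogonal
projection does not increase the area of parallelograms.
-/

open Submodule

lemma real_inner_sq_le_norm_sq_mul_norm_sq (x y : V) : ⟪x, y⟫ ^ 2 ≤ ‖x‖ ^ 2 * ‖y‖ ^ 2 := by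
  simpa [mul_pow, sq_abs] using pow_le_pow_left₀ (abs_nonneg _) (abs_real_inner_le_norm x y) 2

lemma projDist_eq_wedgeNorm_div {x y : V} (hx : x ≠ 0) (hy : y ≠ 0) :
    projDist x y = wedgeNorm x y / (‖x‖ * ‖y‖) := by
  have hxy : 0 < ‖x‖ * ‖y‖ := by positivity
  rw [projDist, wedgeNorm, ← Real.sqrt_sq hxy.le, ← Real.sqrt_div' _ (sq_nonneg _), sub_div,
    mul_pow, div_self (by positivity)]

lemma wedgeNorm_le_wedgeNorm_add {a a' b b' : V} (ha : ⟪a, a'⟫ = 0) (hb : ⟪b, b'⟫ = 0)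
    (hab' : ⟪a, b'⟫ = 0) (ha'b : ⟪a', b⟫ = 0) :
    wedgeNorm a b ≤ wedgeNorm (a + a') (b + b') := by
  have hnorm_a : ‖a + a'‖ ^ 2 = ‖a‖ ^ 2 + ‖a'‖ ^ 2 := by rw [norm_add_sq_real, ha]; ring
  have hnorm_b : ‖b + b'‖ ^ 2 = ‖b‖ ^ 2 + ‖b'‖ ^ 2 := by rw [norm_add_sq_real, hb]; ring
  have hinner : ⟪a + a', b + b'⟫ = ⟪a, b⟫ + ⟪a', b'⟫ := by
    simp only [inner_add_left, inner_add_right, hab', ha'b]; ring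
  have hcross : ⟪a, b⟫ * ⟪a', b'⟫ ≤ (‖a‖ * ‖b‖) * (‖a'‖ * ‖b'‖) :=
    (le_abs_self _).trans <| (abs_mul _ _).trans_le <|
      mul_le_mul (abs_real_inner_le_norm a b) (abs_real_inner_le_norm a' b') (abs_nonneg _)
        (by positivity)
  apply Real.sqrt_le_sqrt
  rw [hnorm_a, hnorm_b, hinner]
  -- the excess is `‖a‖²‖b'‖² + ‖a'‖²‖b‖² - 2⟪a, b⟫⟪a', b'⟫` plus `‖a' ∧ b'‖² ≥ 0`; AM-GM and
  -- Cauchy–Schwarz make the first part nonnegative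
  nlinarith [real_inner_sq_le_norm_sq_mul_norm_sq a' b', sq_nonneg (‖a‖ * ‖b'‖ - ‖a'‖ * ‖b‖)]

section Projection

variable (K : Submodule ℝ V) [K.HasOrthogonalProjection]

lemma wedgeNorm_starProjection_le (x y : V) :
    wedgeNorm (K.starProjection x) (K.starProjection y) ≤ wedgeNorm x y := by
  have hx := sub_starProjection_mem_orthogonal (K := K) x
  have hy := sub_starProjection_mem_orthogonal (K := K) y
  have hPx := K.starProjection_apply_mem x
  have hPy := K.starProjection_apply_mem y
  simpa using wedgeNorm_le_wedgeNorm_add (inner_right_of_mem_orthogonal hPx hx)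
    (inner_right_of_mem_orthogonal hPy hy) (inner_right_of_mem_orthogonal hPx hy)
    (inner_left_of_mem_orthogonal hPy hx)

lemma inner_sq_le_of_mem_orthogonal (x : V) {y : V} (hy : y ∈ Kᗮ) :
    ⟪x, y⟫ ^ 2 ≤ ‖x - K.starProjection x‖ ^ 2 * ‖y‖ ^ 2 := by
  have hxy : ⟪x, y⟫ = ⟪x - K.starProjection x, y⟫ := by
    rw [inner_sub_left, inner_right_of_mem_orthogonal (K.starProjection_apply_mem x) hy,
      sub_zero]
  rw [hxy]
  exact real_inner_sq_le_norm_sq_mul_norm_sq _ _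

lemma exists_mem_orthogonal_inner_sq_eq (hK : K ≠ ⊤) (x : V) :
    ∃ y ∈ Kᗮ, y ≠ 0 ∧ ⟪x, y⟫ ^ 2 = ‖x - K.starProjection x‖ ^ 2 * ‖y‖ ^ 2 := by
  by_cases hq : x - K.starProjection x = 0
  · obtain ⟨y, hyK, hy0⟩ :=
      exists_mem_ne_zero_of_ne_bot (mt K.orthogonal_eq_bot_iff.mp hK)
    refine ⟨y, hyK, hy0, le_antisymm ?_ ?_⟩
    · exact inner_sq_le_of_mem_orthogonal K x hyK
    · simpa [hq] using sq_nonneg ⟪x, y⟫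
  · refine ⟨_, sub_starProjection_mem_orthogonal x, hq, ?_⟩
    have hxq : ⟪x, x - K.starProjection x⟫ = ‖x - K.starProjection x‖ ^ 2 := by
      rw [← real_inner_self_eq_norm_sq, inner_sub_left (x := x),
        inner_right_of_mem_orthogonal (K.starProjection_apply_mem x)
          (sub_starProjection_mem_orthogonal x), sub_zero]
    rw [hxq]
    ring

lemma norm_starProjection_div_norm {x : V} (hx : x ≠ 0) :
    ‖K.starProjection x‖ / ‖x‖ = √(1 - ‖x - K.starProjection x‖ ^ 2 / ‖x‖ ^ 2) := by
  have hpyth := norm_sq_eq_add_norm_sq_starProjection x K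
  rw [starProjection_orthogonal_val] at hpyth
  have hx' : ‖x‖ ≠ 0 := norm_ne_zero_iff.mpr hx
  rw [← Real.sqrt_sq (by positivity : 0 ≤ ‖K.starProjection x‖ / ‖x‖)]
  congr 1
  field_simp
  linarith

lemma projDistToSub_orthogonal (hK : K ≠ ⊤) {x : V} (hx : x ≠ 0) :
    projDistToSub x Kᗮ = ‖K.starProjection x‖ / ‖x‖ := by
  have hrescale : ∀ y : V, y ≠ 0 → ‖x - K.starProjection x‖ ^ 2 / ‖x‖ ^ 2 =
      ‖x - K.starProjection x‖ ^ 2 * ‖y‖ ^ 2 / (‖x‖ ^ 2 * ‖y‖ ^ 2) := fun y hy =>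
    (mul_div_mul_right _ _ (by positivity)).symm
  refine IsLeast.csInf_eq ⟨?_, ?_⟩
  · obtain ⟨y, hyK, hy0, hsharp⟩ := exists_mem_orthogonal_inner_sq_eq K hK x
    exact ⟨y, hyK, hy0, by
      rw [projDist, hsharp, ← hrescale y hy0, norm_starProjection_div_norm K hx]⟩
  · rintro _ ⟨y, hyK, hy0, rfl⟩
    rw [norm_starProjection_div_norm K hx, hrescale y hy0, projDist]
    gcongr
    exact inner_sq_le_of_mem_orthogonal K x hyK

end Projection

theorem stmt0_general [FiniteDimensional ℝ V]
    (W : Submodule ℝ V) (hWt : W ≠ ⊤)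
    (x y : V) (hxW : x ∉ Wᗮ) (hyW : y ∉ Wᗮ) :
    projDist ((W.orthogonalProjectionOnto x : V)) ((W.orthogonalProjectionOnto y : V)) ≤
      (projDistToSub x Wᗮ)⁻¹ * (projDistToSub y Wᗮ)⁻¹ * projDist x y := by
  have hx : x ≠ 0 := fun h => hxW (h ▸ Wᗮ.zero_mem)
  have hy : y ≠ 0 := fun h => hyW (h ▸ Wᗮ.zero_mem)
  have hPx : W.starProjection x ≠ 0 := mt (starProjection_apply_eq_zero_iff W).mp hxW
  have hPy : W.starProjection y ≠ 0 := mt (starProjection_apply_eq_zero_iff W).mp hyW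
  simp only [coe_orthogonalProjectionOnto_apply]
  rw [projDistToSub_orthogonal W hWt hx, projDistToSub_orthogonal W hWt hy,
    projDist_eq_wedgeNorm_div hx hy, projDist_eq_wedgeNorm_div hPx hPy]
  calc wedgeNorm (W.starProjection x) (W.starProjection y) /
        (‖W.starProjection x‖ * ‖W.starProjection y‖)
      ≤ wedgeNorm x y / (‖W.starProjection x‖ * ‖W.starProjection y‖) := by
        gcongr
        exact wedgeNorm_starProjection_le W x y
    _ = _ := by
        have := norm_ne_zero_iff.mpr hx
        have := norm_ne_zero_iff.mpr hy
        field_simp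

/-- Lemma 2.6 of the paper. For a nonzero proper subspace `W` of `V` and
nonzero `x, y ∉ W^⊥`,
`d(P_W x̄, P_W ȳ) ≤ d(x̄, P(W^⊥))⁻¹ · d(ȳ, P(W^⊥))⁻¹ · d(x̄, ȳ)`. -/
theorem stmt0 [FiniteDimensional ℝ V] (hdim : 2 ≤ Module.finrank ℝ V)
    (W : Submodule ℝ V) (hW0 : W ≠ ⊥) (hWt : W ≠ ⊤)
    (x y : V) (hx : x ≠ 0) (hy : y ≠ 0) (hxW : x ∉ Wᗮ) (hyW : y ∉ Wᗮ) :
    projDist ((W.orthogonalProjectionOnto x : V)) ((W.orthogonalProjectionOnto y : V)) ≤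
      (projDistToSub x Wᗮ)⁻¹ * (projDistToSub y Wᗮ)⁻¹ * projDist x y :=
  stmt0_general W hWt x y hxW hyW
end

section
/- Let V = E₀ ⊕ ⋯ ⊕ E_s be a direct-sum decomposition of V into nonzero subspaces and let κ = κ(E₀,…,E_s). Then for every x ∈ V, |x| ≥ 2^{-s/2} · κ^s · max_{0≤i≤s} |L_i(x)|. -/
open scoped RealInnerProductSpace
open Filter

variable {V : Type*} [NormedAddCommGroup V] [InnerProductSpace ℝ V]

lemma projDist_nonneg (x y : V) : 0 ≤ projDist x y := Real.sqrt_nonneg _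

lemma projDist_le_one (x y : V) : projDist x y ≤ 1 := by
  have h1 : 0 ≤ ⟪x, y⟫ ^ 2 / (‖x‖ ^ 2 * ‖y‖ ^ 2) :=
    div_nonneg (sq_nonneg _) (by positivity)
  calc projDist x y ≤ Real.sqrt 1 := Real.sqrt_le_sqrt (by linarith)
    _ = 1 := Real.sqrt_one

lemma kappa_bddBelow {ι : Type*} (E : ι → Submodule ℝ V) :
    BddBelow {r : ℝ | ∃ (I J : Finset ι) (x y : V), I.Nonempty ∧ J.Nonempty ∧ Disjoint I J ∧
      x ∈ (⨆ i ∈ I, E i) ∧ x ≠ 0 ∧ y ∈ (⨆ j ∈ J, E j) ∧ y ≠ 0 ∧ r = projDist x y} := by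
  refine ⟨0, fun r hr => ?_⟩
  obtain ⟨I, J, x, y, _, _, _, _, _, _, _, rfl⟩ := hr
  exact projDist_nonneg x y

lemma kappa_nonneg {ι : Type*} (E : ι → Submodule ℝ V) : 0 ≤ kappa E := by
  refine Real.sInf_nonneg fun r hr => ?_
  obtain ⟨I, J, x, y, _, _, _, _, _, _, _, rfl⟩ := hr
  exact projDist_nonneg x y

/-- The key analytic inequality. -/
lemma key_ineq (κ : ℝ) (hκ : 0 ≤ κ) (w v : V) (hw : w ≠ 0) (hv : v ≠ 0)
    (h : κ ≤ projDist w v) : κ ^ 2 / 2 * (‖w‖ ^ 2 + ‖v‖ ^ 2) ≤ ‖w + v‖ ^ 2 := by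
  have hwp : (0:ℝ) < ‖w‖ ^ 2 := by
    have := norm_pos_iff.mpr hw; positivity
  have hvp : (0:ℝ) < ‖v‖ ^ 2 := by
    have := norm_pos_iff.mpr hv; positivity
  set t : ℝ := ⟪w, v⟫ ^ 2 / (‖w‖ ^ 2 * ‖v‖ ^ 2) with ht
  have htnn : 0 ≤ t := div_nonneg (sq_nonneg _) (by positivity)
  have ht1 : t ≤ 1 := by
    rw [div_le_one (by positivity)]
    have := abs_real_inner_le_norm w v
    nlinarith [abs_nonneg ⟪w,v⟫, sq_abs ⟪w,v⟫]
  have hκ2 : κ ^ 2 ≤ 1 - t := by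
    rw [← Real.le_sqrt hκ (by linarith)]; exact h
  -- ⟪w,v⟫ ^ 2 ≤ (1 - κ^2) * (‖w‖^2 * ‖v‖^2)
  have hip : ⟪w, v⟫ ^ 2 ≤ (1 - κ ^ 2) * (‖w‖ ^ 2 * ‖v‖ ^ 2) := by
    have h' : t * (‖w‖ ^ 2 * ‖v‖ ^ 2) ≤ (1 - κ ^ 2) * (‖w‖ ^ 2 * ‖v‖ ^ 2) :=
      mul_le_mul_of_nonneg_right (by linarith) (by positivity)
    rwa [ht, div_mul_cancel₀ _ (by positivity : (‖w‖ ^ 2 * ‖v‖ ^ 2) ≠ 0)] at h'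
  set a : ℝ := Real.sqrt (1 - κ ^ 2) with ha
  have hann : 0 ≤ a := Real.sqrt_nonneg _
  have ha2 : a ^ 2 = 1 - κ ^ 2 := Real.sq_sqrt (by nlinarith)
  have hip' : ⟪w, v⟫ ^ 2 ≤ (a * (‖w‖ * ‖v‖)) ^ 2 := by
    rw [mul_pow, ha2, mul_pow]; exact hip
  have hip2 : -(a * (‖w‖ * ‖v‖)) ≤ ⟪w, v⟫ := by
    nlinarith [hip', mul_nonneg (mul_nonneg hann (norm_nonneg w)) (norm_nonneg v)]
  have hna : ‖w + v‖ ^ 2 = ‖w‖ ^ 2 + 2 * ⟪w, v⟫ + ‖v‖ ^ 2 := norm_add_sq_real w v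
  -- a ≤ 1 - κ^2/2
  have haub : a ≤ 1 - κ ^ 2 / 2 := by
    nlinarith [sq_nonneg (a - (1 - κ ^ 2 / 2)), sq_nonneg κ]
  have h2ab : 2 * (‖w‖ * ‖v‖) ≤ ‖w‖ ^ 2 + ‖v‖ ^ 2 := by nlinarith [sq_nonneg (‖w‖ - ‖v‖)]
  nlinarith [mul_nonneg (norm_nonneg w) (norm_nonneg v), sq_nonneg κ,
    mul_le_mul_of_nonneg_left h2ab hann,
    mul_le_mul_of_nonneg_right haub (mul_nonneg (norm_nonneg w) (norm_nonneg v))]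

/-- Lemma 3.6 of the paper. For a splitting `V = E₀ ⊕ ⋯ ⊕ E_s` with
projections `L_i` and `κ = κ(E₀,…,E_s)`:
`|x| ≥ 2^{-s/2} · κ^s · max_i |L_i(x)|`. -/
theorem stmt5 [FiniteDimensional ℝ V] (hdim : 2 ≤ Module.finrank ℝ V)
    (s : ℕ) (E : Fin (s+1) → Submodule ℝ V)
    (hE : DirectSum.IsInternal E) (hEne : ∀ k, E k ≠ ⊥)
    (L : Fin (s+1) → V →ₗ[ℝ] V)
    (hL1 : ∀ x : V, ∑ k, L k x = x) (hL2 : ∀ k x, L k x ∈ E k)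
    (x : V) :
    (2 : ℝ) ^ (-(s : ℝ) / 2) * kappa E ^ s *
      (Finset.univ.sup' Finset.univ_nonempty fun k => ‖L k x‖) ≤ ‖x‖ := by
  rcases Nat.eq_zero_or_pos s with hs | hs
  · subst hs
    have hx : L 0 x = x := by have := hL1 x; rwa [Fin.sum_univ_one] at this
    simp only [Nat.cast_zero, neg_zero, zero_div, Real.rpow_zero, pow_zero, mul_one, one_mul]
    apply Finset.sup'_le
    intro k _
    fin_cases k
    simp [hx]
  -- now s ≥ 1
  set κ := kappa E with hκdef
  have hκ0 : 0 ≤ κ := kappa_nonneg E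
  have hκ1 : κ ≤ 1 := by
    obtain ⟨e0, he0m, he0⟩ := Submodule.exists_mem_ne_zero_of_ne_bot (hEne ⟨0, by omega⟩)
    obtain ⟨e1, he1m, he1⟩ := Submodule.exists_mem_ne_zero_of_ne_bot (hEne ⟨1, by omega⟩)
    have hmem : projDist e0 e1 ∈ {r : ℝ | ∃ (I J : Finset (Fin (s+1))) (x y : V),
        I.Nonempty ∧ J.Nonempty ∧ Disjoint I J ∧
        x ∈ (⨆ i ∈ I, E i) ∧ x ≠ 0 ∧ y ∈ (⨆ j ∈ J, E j) ∧ y ≠ 0 ∧ r = projDist x y} := by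
      refine ⟨{⟨0, by omega⟩}, {⟨1, by omega⟩}, e0, e1, Finset.singleton_nonempty _,
        Finset.singleton_nonempty _, ?_, ?_, he0, ?_, he1, rfl⟩
      · rw [Finset.disjoint_left]
        rintro a ha hb
        simp only [Finset.mem_singleton, Fin.ext_iff] at ha hb
        omega
      · exact Submodule.mem_iSup_of_mem _ (Submodule.mem_iSup_of_mem (Finset.mem_singleton_self _) he0m)
      · exact Submodule.mem_iSup_of_mem _ (Submodule.mem_iSup_of_mem (Finset.mem_singleton_self _) he1m)
    exact le_trans (csInf_le (kappa_bddBelow E) hmem) (projDist_le_one e0 e1)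
  set c : ℝ := κ ^ 2 / 2 with hcdef
  have hc0 : 0 ≤ c := by positivity
  have hc1 : c ≤ 1 := by nlinarith
  -- tail sums
  set w : ℕ → V := fun i => ∑ k ∈ Finset.univ.filter (fun k : Fin (s+1) => i ≤ (k : ℕ)), L k x
    with hwdef
  have hw0 : w 0 = x := by
    simp only [hwdef]
    rw [show Finset.univ.filter (fun k : Fin (s+1) => 0 ≤ (k : ℕ)) = Finset.univ by simp]
    exact hL1 x
  have hwsplit : ∀ (i : ℕ) (hi : i ≤ s),
      w i = L ⟨i, Nat.lt_succ_of_le hi⟩ x + w (i+1) := by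
    intro i hi
    have hset : Finset.univ.filter (fun k : Fin (s+1) => i ≤ (k : ℕ)) =
        insert ⟨i, Nat.lt_succ_of_le hi⟩
          (Finset.univ.filter (fun k : Fin (s+1) => i+1 ≤ (k : ℕ))) := by
      ext k
      simp only [Finset.mem_filter, Finset.mem_univ, true_and, Finset.mem_insert, Fin.ext_iff]
      omega
    simp only [hwdef]
    rw [hset]
    rw [Finset.sum_insert (by simp)]
  -- mem of w (i+1) in the sup
  have hwmem : ∀ i : ℕ,
      w (i+1) ∈ ⨆ j ∈ (Finset.univ.filter (fun k : Fin (s+1) => i+1 ≤ (k : ℕ))), E j := by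
    intro i
    refine Submodule.sum_mem _ fun k hk => ?_
    exact Submodule.mem_iSup_of_mem k (Submodule.mem_iSup_of_mem hk (hL2 k x))
  -- the split inequality
  have hsplit : ∀ (i : ℕ) (hi : i < s),
      c * ‖L ⟨i, Nat.lt_succ_of_lt hi⟩ x‖ ^ 2 ≤ ‖w i‖ ^ 2 ∧
      c * ‖w (i+1)‖ ^ 2 ≤ ‖w i‖ ^ 2 := by
    intro i hi
    have hsum := hwsplit i (le_of_lt hi)
    set e : V := L ⟨i, Nat.lt_succ_of_lt hi⟩ x with he
    by_cases hz1 : e = 0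
    · rw [hz1, zero_add] at hsum
      constructor
      · rw [hz1, norm_zero]; nlinarith [sq_nonneg ‖w i‖]
      · rw [← hsum]; nlinarith [sq_nonneg ‖w i‖]
    by_cases hz2 : w (i+1) = 0
    · rw [hz2, add_zero] at hsum
      constructor
      · rw [← hsum]; nlinarith [sq_nonneg ‖w i‖]
      · rw [hz2, norm_zero]; nlinarith [sq_nonneg ‖w i‖]
    -- both nonzero: use kappa
    have hkle : κ ≤ projDist e (w (i+1)) := by
      refine csInf_le (kappa_bddBelow E) ?_
      refine ⟨{⟨i, Nat.lt_succ_of_lt hi⟩},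
        Finset.univ.filter (fun k : Fin (s+1) => i+1 ≤ (k : ℕ)),
        e, w (i+1), Finset.singleton_nonempty _,
        ⟨⟨i+1, by omega⟩, by simp⟩, ?_, ?_, hz1, hwmem i, hz2, rfl⟩
      · simp only [Finset.disjoint_left, Finset.mem_singleton, Finset.mem_filter,
          Finset.mem_univ, true_and]
        rintro a rfl
        simp
      · exact Submodule.mem_iSup_of_mem _
          (Submodule.mem_iSup_of_mem (Finset.mem_singleton_self _) (hL2 _ x))
    have := key_ineq κ hκ0 _ _ hz1 hz2 hkle
    rw [← hsum] at this
    constructor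
    · nlinarith [sq_nonneg ‖w (i+1)‖]
    · nlinarith [sq_nonneg ‖e‖]
  -- Claim 1 by induction
  have claim1 : ∀ i : ℕ, i ≤ s → c ^ i * ‖w i‖ ^ 2 ≤ ‖x‖ ^ 2 := by
    intro i
    induction i with
    | zero => intro _; rw [hw0]; simp
    | succ n ih =>
      intro hn
      have h1 := ih (by omega)
      have h2 := (hsplit n (by omega)).2
      calc c ^ (n+1) * ‖w (n+1)‖ ^ 2 = c ^ n * (c * ‖w (n+1)‖ ^ 2) := by ring
        _ ≤ c ^ n * ‖w n‖ ^ 2 := by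
            apply mul_le_mul_of_nonneg_left h2 (by positivity)
        _ ≤ ‖x‖ ^ 2 := h1
  -- Claim 2
  have claim2 : ∀ k : Fin (s+1), c ^ s * ‖L k x‖ ^ 2 ≤ ‖x‖ ^ 2 := by
    intro k
    rcases Nat.lt_or_ge (k : ℕ) s with hk | hk
    · have h1 := claim1 k (by omega)
      have h2 := (hsplit k hk).1
      have hkk : (⟨(k:ℕ), Nat.lt_succ_of_lt hk⟩ : Fin (s+1)) = k := by
        apply Fin.ext; rfl
      rw [hkk] at h2
      have hcpow : c ^ s ≤ c ^ ((k:ℕ) + 1) := pow_le_pow_of_le_one hc0 hc1 (by omega)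
      calc c ^ s * ‖L k x‖ ^ 2 ≤ c ^ ((k:ℕ)+1) * ‖L k x‖ ^ 2 := by
            apply mul_le_mul_of_nonneg_right hcpow (by positivity)
        _ = c ^ (k:ℕ) * (c * ‖L k x‖ ^ 2) := by ring
        _ ≤ c ^ (k:ℕ) * ‖w k‖ ^ 2 := mul_le_mul_of_nonneg_left h2 (by positivity)
        _ ≤ ‖x‖ ^ 2 := h1
    · -- k = s
      have hks : (k : ℕ) = s := by omega
      have hws : w s = L k x := by
        simp only [hwdef]
        have hset : Finset.univ.filter (fun j : Fin (s+1) => s ≤ (j : ℕ)) = {k} := by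
          ext j
          simp only [Finset.mem_filter, Finset.mem_univ, true_and, Finset.mem_singleton,
            Fin.ext_iff, hks]
          omega
        rw [hset, Finset.sum_singleton]
      have := claim1 s le_rfl
      rwa [hws] at this
  -- conclude
  obtain ⟨k, _, hkeq⟩ := Finset.exists_mem_eq_sup' (Finset.univ_nonempty (α := Fin (s+1)))
    (fun k => ‖L k x‖)
  rw [hkeq]
  set A : ℝ := (2:ℝ) ^ (-(s:ℝ)/2) * κ ^ s with hA
  have hA0 : 0 ≤ A := by positivity
  have hA2 : A ^ 2 = c ^ s := by
    have h1 : ((2:ℝ) ^ (-(s:ℝ)/2)) ^ 2 = ((2:ℝ) ^ s)⁻¹ := by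
      rw [← Real.rpow_natCast ((2:ℝ) ^ (-(s:ℝ)/2)) 2, ← Real.rpow_mul (by norm_num)]
      rw [show (-(s:ℝ)/2) * ((2:ℕ):ℝ) = -(s:ℝ) by push_cast; ring]
      rw [Real.rpow_neg (by norm_num), Real.rpow_natCast]
    rw [hA, mul_pow, h1, hcdef, div_pow, ← pow_mul, ← pow_mul, Nat.mul_comm,
      inv_mul_eq_div]
  have h2 := claim2 k
  rw [← hA2] at h2
  nlinarith [norm_nonneg x, norm_nonneg (L k x), mul_nonneg hA0 (norm_nonneg (L k x))]
end

section
/- Let V = E₀ ⊕ ⋯ ⊕ E_s be a direct-sum decomposition of V into nonzero subspaces with s ≥ 1 and dim E₀ = 1, and let κ = κ(E₀,…,E_s). Then for every x̄ ∈ P(V) ∖ P(V⁰), d(x̄, P(V⁰)) ≥ (2s)^{-1} · κ · ‖g(x̄)‖_∞^{-1}. -/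
/-! For `y ∈ V⁰`, `‖x‖ · d(x̄, ȳ)` is the distance from `x` to the line `ℝ y`, attained at
`x - t y = f₀(x) (u₀ + w)` with `w ∈ V⁰`. As `u₀ ∈ E₀` and `w ∈ V⁰` lie in sums over disjoint
index sets, `‖u₀ + w‖ ≥ d(ū₀, w̄) ≥ κ`, hence `‖x‖ d(x̄, ȳ) ≥ |f₀(x)| κ`. On the other hand
`x = ∑ L_i x` gives `‖x‖ ≤ (s + 1) |f₀(x)| ‖g(x̄)‖_∞ ≤ 2s |f₀(x)| ‖g(x̄)‖_∞`. -/

open scoped RealInnerProductSpace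
open Filter

variable {V : Type*} [NormedAddCommGroup V] [InnerProductSpace ℝ V]

lemma norm_sub_smul_sq (x y : V) (c : ℝ) :
    ‖x - c • y‖ ^ 2 = ‖x‖ ^ 2 - 2 * c * ⟪x, y⟫ + c ^ 2 * ‖y‖ ^ 2 := by
  rw [norm_sub_sq_real, norm_smul, real_inner_smul_right, Real.norm_eq_abs, mul_pow, sq_abs]
  ring

lemma projDist_eq_norm_sub_div (x y : V) (hx : x ≠ 0) :
    projDist x y = ‖x - (⟪x, y⟫ / ‖y‖ ^ 2) • y‖ / ‖x‖ := by
  have hx' : 0 < ‖x‖ := norm_pos_iff.mpr hx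
  rcases eq_or_ne y 0 with rfl | hy
  · simp [projDist, hx'.ne']
  have hy' : 0 < ‖y‖ := norm_pos_iff.mpr hy
  rw [projDist, ← Real.sqrt_sq (by positivity : 0 ≤ ‖x - _‖ / ‖x‖), div_pow,
    norm_sub_smul_sq]
  congr 1
  field_simp
  ring

lemma norm_sub_inner_div_norm_sq_smul_le (x y : V) (c : ℝ) :
    ‖x - (⟪x, y⟫ / ‖y‖ ^ 2) • y‖ ≤ ‖x - c • y‖ := by
  rcases eq_or_ne y 0 with rfl | hy
  · simp
  have hy' : 0 < ‖y‖ := norm_pos_iff.mpr hy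
  refine le_of_pow_le_pow_left₀ two_ne_zero (norm_nonneg _) ?_
  rw [norm_sub_smul_sq, norm_sub_smul_sq, div_pow]
  field_simp
  nlinarith [sq_nonneg (c * ‖y‖ ^ 2 - ⟪x, y⟫)]

lemma projDist_le_norm_sub_smul_div (x y : V) (hx : x ≠ 0) (c : ℝ) :
    projDist x y ≤ ‖x - c • y‖ / ‖x‖ := by
  rw [projDist_eq_norm_sub_div x y hx]
  gcongr
  exact norm_sub_inner_div_norm_sq_smul_le x y c

lemma norm_sum_le_card_mul_sup' {ι E : Type*} [SeminormedAddCommGroup E] (s : Finset ι)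
    (hs : s.Nonempty) (f : ι → E) :
    ‖∑ i ∈ s, f i‖ ≤ s.card * s.sup' hs (‖f ·‖) := by
  calc ‖∑ i ∈ s, f i‖ ≤ ∑ i ∈ s, ‖f i‖ := norm_sum_le _ _
    _ ≤ ∑ _i ∈ s, s.sup' hs (‖f ·‖) := Finset.sum_le_sum fun i hi => s.le_sup' (‖f ·‖) hi
    _ = s.card * s.sup' hs (‖f ·‖) := by rw [Finset.sum_const, nsmul_eq_mul]

lemma kappa_le_projDist {ι : Type*} {E : ι → Submodule ℝ V} {I J : Finset ι}
    (hIJ : Disjoint I J) {x y : V} (hx : x ∈ ⨆ i ∈ I, E i) (hy : y ∈ ⨆ j ∈ J, E j)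
    (hx0 : x ≠ 0) (hy0 : y ≠ 0) : kappa E ≤ projDist x y := by
  have nonempty_of_mem {K : Finset ι} {z : V} (hz : z ∈ ⨆ k ∈ K, E k) (hz0 : z ≠ 0) :
      K.Nonempty := by
    contrapose! hz0
    simpa [hz0] using hz
  refine csInf_le ⟨0, ?_⟩ ⟨I, J, x, y, nonempty_of_mem hx hx0, nonempty_of_mem hy hy0, hIJ,
    hx, hx0, hy, hy0, rfl⟩
  rintro r ⟨I, J, a, b, -, -, -, -, -, -, -, rfl⟩
  exact Real.sqrt_nonneg _

section Splitting

variable {s : ℕ} (E : Fin (s+1) → Submodule ℝ V)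

lemma le_Vlow {i : ℕ} {k : Fin (s+1)} (h : i < k) : E k ≤ Vlow E i :=
  le_iSup₂ (f := fun (j : Fin (s+1)) (_ : i < (j : ℕ)) => E j) k h

lemma le_Whigh {i : ℕ} {k : Fin (s+1)} (h : (k : ℕ) ≤ i) : E k ≤ Whigh E i :=
  le_iSup₂ (f := fun (j : Fin (s+1)) (_ : (j : ℕ) ≤ i) => E j) k h

lemma Vlow_eq_biSup (i : ℕ) : Vlow E i = ⨆ j ∈ Finset.univ.filter (i < ·.val), E j := by
  simp [Vlow]

lemma Whigh_eq_biSup (i : ℕ) : Whigh E i = ⨆ j ∈ Finset.univ.filter (·.val ≤ i), E j := by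
  simp [Whigh]

lemma kappa_le_projDist_of_mem_Whigh_Vlow {i : ℕ} {x y : V} (hx : x ∈ Whigh E i)
    (hy : y ∈ Vlow E i) (hx0 : x ≠ 0) (hy0 : y ≠ 0) : kappa E ≤ projDist x y := by
  rw [Whigh_eq_biSup] at hx
  rw [Vlow_eq_biSup] at hy
  refine kappa_le_projDist ?_ hx hy hx0 hy0
  rw [Finset.disjoint_filter]
  intro j _ hj
  omega

lemma kappa_le_norm_add {i : ℕ} (hV : Vlow E i ≠ ⊥) {u w : V} (hu : u ∈ Whigh E i)
    (hu1 : ‖u‖ = 1) (hw : w ∈ Vlow E i) : kappa E ≤ ‖u + w‖ := by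
  have hu0 : u ≠ 0 := norm_ne_zero_iff.mp (hu1.trans_ne one_ne_zero)
  rcases eq_or_ne w 0 with rfl | hw0
  · obtain ⟨y, hy, hy0⟩ := Submodule.exists_mem_ne_zero_of_ne_bot hV
    calc kappa E ≤ projDist u y := kappa_le_projDist_of_mem_Whigh_Vlow E hu hy hu0 hy0
      _ ≤ ‖u + 0‖ := by rw [add_zero, hu1]; exact projDist_le_one u y
  · calc kappa E ≤ projDist u w := kappa_le_projDist_of_mem_Whigh_Vlow E hu hw hu0 hw0
      _ ≤ ‖u - (-1 : ℝ) • w‖ / ‖u‖ := projDist_le_norm_sub_smul_div u w hu0 _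
      _ = ‖u + w‖ := by rw [hu1, div_one, neg_one_smul, sub_neg_eq_add]

lemma abs_mul_kappa_le_norm {i : ℕ} (hV : Vlow E i ≠ ⊥) {u v : V} {a : ℝ} (hu : u ∈ Whigh E i)
    (hu1 : ‖u‖ = 1) (hv : v - a • u ∈ Vlow E i) : |a| * kappa E ≤ ‖v‖ := by
  rcases eq_or_ne a 0 with rfl | ha
  · simp
  have hv_eq : v = a • (u + a⁻¹ • (v - a • u)) := by
    rw [smul_add, smul_inv_smul₀ ha, add_sub_cancel]
  rw [hv_eq, norm_smul, Real.norm_eq_abs]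
  exact mul_le_mul_of_nonneg_left (kappa_le_norm_add E hV hu hu1 (Submodule.smul_mem _ _ hv))
    (abs_nonneg a)

lemma sub_apply_zero_mem_Vlow (L : Fin (s+1) → V →ₗ[ℝ] V) (hL1 : ∀ x : V, ∑ k, L k x = x)
    (hL2 : ∀ k x, L k x ∈ E k) (x : V) : x - L 0 x ∈ Vlow E 0 := by
  rw [sub_eq_iff_eq_add'.mpr ((hL1 x).symm.trans (Fin.sum_univ_succ _))]
  exact Submodule.sum_mem _ fun k _ => le_Vlow E k.succ_pos (hL2 k.succ x)

end Splitting

theorem stmt7_general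
    (s : ℕ) (hs : 1 ≤ s) (E : Fin (s+1) → Submodule ℝ V)
    (hEne : ∀ k, E k ≠ ⊥)
    (L : Fin (s+1) → V →ₗ[ℝ] V)
    (hL1 : ∀ x : V, ∑ k, L k x = x) (hL2 : ∀ k x, L k x ∈ E k)
    (u₀ : V) (hu₀ : u₀ ∈ E 0) (hu₀n : ‖u₀‖ = 1)
    (f₀ : V →ₗ[ℝ] ℝ) (hf₀ : ∀ x, L 0 x = f₀ x • u₀)
    (x : V) (hx : x ≠ 0) (hfx : f₀ x ≠ 0) :
    (2 * (s : ℝ))⁻¹ * kappa E *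
        (Finset.univ.sup' Finset.univ_nonempty fun k => ‖(f₀ x)⁻¹ • L k x‖)⁻¹ ≤
      projDistToSub x (Vlow E 0) := by
  set M := Finset.univ.sup' Finset.univ_nonempty fun k => ‖(f₀ x)⁻¹ • L k x‖
  have hV : Vlow E 0 ≠ ⊥ :=
    ne_bot_of_le_ne_bot (hEne ⟨1, by omega⟩) (le_Vlow E (by simp))
  have hu₀W : u₀ ∈ Whigh E 0 := le_Whigh E (by simp) hu₀
  have hM : 1 ≤ M := by
    refine le_of_eq_of_le ?_ (Finset.le_sup' _ (Finset.mem_univ 0))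
    rw [hf₀, smul_smul, inv_mul_cancel₀ hfx, one_smul, hu₀n]
  have hxM : ‖x‖ ≤ 2 * s * (|f₀ x| * M) := by
    have hsum := norm_sum_le_card_mul_sup' Finset.univ Finset.univ_nonempty
      fun k => (f₀ x)⁻¹ • L k x
    rw [← Finset.smul_sum, hL1, norm_smul, norm_inv, Real.norm_eq_abs, Finset.card_univ,
      Fintype.card_fin, inv_mul_le_iff₀ (abs_pos.mpr hfx)] at hsum
    refine hsum.trans ?_
    have hs' : ((s + 1 : ℕ) : ℝ) ≤ 2 * s := by exact_mod_cast (by omega : s + 1 ≤ 2 * s)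
    rw [mul_left_comm]
    exact mul_le_mul_of_nonneg_right hs' (by positivity)
  obtain ⟨y₁, hy₁, hy₁0⟩ := Submodule.exists_mem_ne_zero_of_ne_bot hV
  refine le_csInf ⟨_, y₁, hy₁, hy₁0, rfl⟩ ?_
  rintro _ ⟨y, hy, -, rfl⟩
  have hxy : |f₀ x| * kappa E ≤ ‖x - (⟪x, y⟫ / ‖y‖ ^ 2) • y‖ := by
    refine abs_mul_kappa_le_norm E hV hu₀W hu₀n ?_
    rw [sub_right_comm, ← hf₀]
    exact sub_mem (sub_apply_zero_mem_Vlow E L hL1 hL2 x) (Submodule.smul_mem _ _ hy)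
  have hx' : 0 < ‖x‖ := norm_pos_iff.mpr hx
  rw [projDist_eq_norm_sub_div x y hx]
  calc (2 * (s : ℝ))⁻¹ * kappa E * M⁻¹ = |f₀ x| * kappa E / (2 * s * (|f₀ x| * M)) := by
        field_simp
    _ ≤ |f₀ x| * kappa E / ‖x‖ :=
        div_le_div_of_nonneg_left (mul_nonneg (abs_nonneg _) (kappa_nonneg E)) hx' hxM
    _ ≤ _ := div_le_div_of_nonneg_right hxy hx'.le

/-- Lemma 3.8 of the paper. For a splitting `V = E₀ ⊕ ⋯ ⊕ E_s` with
`dim E₀ = 1` and `V⁰ = E₁ ⊕ ⋯ ⊕ E_s`, every `x̄ ∈ P(V) ∖ P(V⁰)` satisfies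
`d(x̄, P(V⁰)) ≥ (2s)⁻¹ · κ · ‖g(x̄)‖_∞⁻¹`. -/
theorem stmt7 [FiniteDimensional ℝ V] (hdim : 2 ≤ Module.finrank ℝ V)
    (s : ℕ) (hs : 1 ≤ s) (E : Fin (s+1) → Submodule ℝ V)
    (hE : DirectSum.IsInternal E) (hEne : ∀ k, E k ≠ ⊥)
    (hE0 : Module.finrank ℝ (E 0) = 1)
    (L : Fin (s+1) → V →ₗ[ℝ] V)
    (hL1 : ∀ x : V, ∑ k, L k x = x) (hL2 : ∀ k x, L k x ∈ E k)
    (u₀ : V) (hu₀ : u₀ ∈ E 0) (hu₀n : ‖u₀‖ = 1)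
    (f₀ : V →ₗ[ℝ] ℝ) (hf₀ : ∀ x, L 0 x = f₀ x • u₀)
    (x : V) (hx : x ≠ 0) (hfx : f₀ x ≠ 0) :
    (2 * (s : ℝ))⁻¹ * kappa E *
        (Finset.univ.sup' Finset.univ_nonempty fun k => ‖(f₀ x)⁻¹ • L k x‖)⁻¹ ≤
      projDistToSub x (Vlow E 0) :=
  stmt7_general s hs E hEne L hL1 hL2 u₀ hu₀ hu₀n f₀ hf₀ x hx hfx
end

section
/- Let V = E₀ ⊕ ⋯ ⊕ E_s be a direct-sum decomposition of V into nonzero subspaces with s ≥ 1 and dim E₀ = 1. Let 0 ≤ i ≤ s and let x̄, ȳ ∈ P(V) ∖ P(V⁰) (so x̄, ȳ ∉ P(Vⁱ) and the projective points P_{(Vⁱ)^⊥} x̄, P_{(Vⁱ)^⊥} ȳ are defined; for i = s interpret P_{(Vⁱ)^⊥} as the identity). Then P_{(Vⁱ)^⊥} x̄ = P_{(Vⁱ)^⊥} ȳ if and only if gᵏ(x̄) = gᵏ(ȳ) for all 0 ≤ k ≤ i. -/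
/-!
Both sides say that `y - c • x ∈ Vⁱ` for some `c ≠ 0`. On the left this is because the kernel of
the orthogonal projection onto `(Vⁱ)ᗮ` is `Vⁱ`; on the right because `Vⁱ` is the common kernel of
`L 0, …, L i`, and the `E₀`-component, a multiple of `u₀ ≠ 0`, forces `c = f₀ y / f₀ x`.
-/

open scoped RealInnerProductSpace
open Filter

variable {V : Type*} [NormedAddCommGroup V] [InnerProductSpace ℝ V]

theorem DirectSum.IsInternal.apply_eq_ite_of_mem {ι R M : Type*} [Fintype ι] [DecidableEq ι]
    [Ring R] [AddCommGroup M] [Module R M] {E : ι → Submodule R M} (hE : DirectSum.IsInternal E)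
    {L : ι → M →ₗ[R] M} (hL1 : ∀ x, ∑ k, L k x = x) (hL2 : ∀ k x, L k x ∈ E k)
    {j : ι} {v : M} (hv : v ∈ E j) (k : ι) :
    L k v = if k = j then v else 0 := by
  refine (iSupIndep_iff_finsetSum_eq_imp_eq E).mp hE.submodule_iSupIndep Finset.univ
    (fun k ↦ L k v) (fun k ↦ if k = j then v else 0) (fun k _ ↦ ⟨hL2 k v, ?_⟩) ?_ k
    (Finset.mem_univ k)
  · split_ifs with hkj
    · exact hkj ▸ hv
    · exact zero_mem _
  · simp [hL1]

theorem mem_Vlow_iff {s : ℕ} {E : Fin (s+1) → Submodule ℝ V} (hE : DirectSum.IsInternal E)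
    {L : Fin (s+1) → V →ₗ[ℝ] V} (hL1 : ∀ x, ∑ k, L k x = x) (hL2 : ∀ k x, L k x ∈ E k)
    (i : ℕ) (z : V) :
    z ∈ Vlow E i ↔ ∀ k : Fin (s+1), (k : ℕ) ≤ i → L k z = 0 := by
  constructor
  · intro hz k hk
    have hVlow : Vlow E i ≤ LinearMap.ker (L k) := iSup_le fun j ↦ iSup_le fun hij v hv ↦ by
      rw [LinearMap.mem_ker, hE.apply_eq_ite_of_mem hL1 hL2 hv, if_neg (Fin.ne_of_val_ne (by omega))]
    exact hVlow hz
  · intro hz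
    rw [← hL1 z]
    refine Submodule.sum_mem _ fun k _ ↦ ?_
    by_cases hk : (k : ℕ) ≤ i
    · rw [hz k hk]
      exact zero_mem _
    · exact Submodule.mem_iSup_of_mem k (Submodule.mem_iSup_of_mem (not_le.mp hk) (hL2 k z))

theorem Submodule.orthogonalProjectionOnto_orthogonal_eq_smul_iff {𝕜 F : Type*} [RCLike 𝕜]
    [NormedAddCommGroup F] [InnerProductSpace 𝕜 F] (K : Submodule 𝕜 F)
    [K.HasOrthogonalProjection] {x y : F} {c : 𝕜} :
    (Kᗮ.orthogonalProjectionOnto y : F) = c • (Kᗮ.orthogonalProjectionOnto x : F) ↔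
      y - c • x ∈ K := by
  rw [← sub_eq_zero, ← Submodule.coe_smul, ← Submodule.coe_sub, ← map_smul, ← map_sub,
    ZeroMemClass.coe_eq_zero, orthogonalProjectionOnto_eq_zero_iff, orthogonal_orthogonal]

theorem exists_ne_zero_forall_eq_smul_iff_inv_smul_eq {ι 𝕜 M : Type*} [Field 𝕜] [AddCommGroup M]
    [Module 𝕜 M] {p : ι → Prop} {a b : ι → M} {α β : 𝕜} {u : M} (hα : α ≠ 0) (hβ : β ≠ 0)
    (hu : u ≠ 0) {k₀ : ι} (hk₀ : p k₀) (ha : a k₀ = α • u) (hb : b k₀ = β • u) :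
    (∃ c : 𝕜, c ≠ 0 ∧ ∀ k, p k → b k = c • a k) ↔ ∀ k, p k → α⁻¹ • a k = β⁻¹ • b k := by
  constructor
  · rintro ⟨c, hc, hab⟩ k hk
    have hβc : β = c * α := smul_left_injective 𝕜 hu <| by
      simpa only [ha, hb, smul_smul] using hab k₀ hk₀
    rw [hab k hk, smul_smul, hβc, mul_inv_rev, inv_mul_cancel_right₀ hc]
  · intro h
    refine ⟨β / α, div_ne_zero hβ hα, fun k hk ↦ ?_⟩
    rw [div_eq_mul_inv, mul_smul, h k hk, smul_inv_smul₀ hβ]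

theorem stmt8_general [FiniteDimensional ℝ V]
    (s : ℕ) (E : Fin (s+1) → Submodule ℝ V)
    (hE : DirectSum.IsInternal E)
    (L : Fin (s+1) → V →ₗ[ℝ] V)
    (hL1 : ∀ x : V, ∑ k, L k x = x) (hL2 : ∀ k x, L k x ∈ E k)
    (u₀ : V) (hu₀n : ‖u₀‖ = 1)
    (f₀ : V →ₗ[ℝ] ℝ) (hf₀ : ∀ x, L 0 x = f₀ x • u₀)
    (i : ℕ)
    (x y : V) (hfx : f₀ x ≠ 0) (hfy : f₀ y ≠ 0) :
    (∃ c : ℝ, c ≠ 0 ∧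
        (Submodule.orthogonalProjectionOnto (Vlow E i)ᗮ y : V) =
          c • (Submodule.orthogonalProjectionOnto (Vlow E i)ᗮ x : V)) ↔
      ∀ k : Fin (s+1), (k : ℕ) ≤ i → (f₀ x)⁻¹ • L k x = (f₀ y)⁻¹ • L k y := by
  have hu₀ : u₀ ≠ 0 := norm_ne_zero_iff.mp (hu₀n ▸ one_ne_zero)
  simp_rw [Submodule.orthogonalProjectionOnto_orthogonal_eq_smul_iff, mem_Vlow_iff hE hL1 hL2,
    map_sub, map_smul, sub_eq_zero]
  exact exists_ne_zero_forall_eq_smul_iff_inv_smul_eq hfx hfy hu₀ (by simp) (hf₀ x) (hf₀ y)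

/-- Lemma 4.1 of the paper. For `x̄, ȳ ∈ P(V) ∖ P(V⁰)` and `0 ≤ i ≤ s`,
`P_{(Vⁱ)^⊥} x̄ = P_{(Vⁱ)^⊥} ȳ` iff `gᵏ(x̄) = gᵏ(ȳ)` for all `0 ≤ k ≤ i`. -/
theorem stmt8 [FiniteDimensional ℝ V] (hdim : 2 ≤ Module.finrank ℝ V)
    (s : ℕ) (hs : 1 ≤ s) (E : Fin (s+1) → Submodule ℝ V)
    (hE : DirectSum.IsInternal E) (hEne : ∀ k, E k ≠ ⊥)
    (hE0 : Module.finrank ℝ (E 0) = 1)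
    (L : Fin (s+1) → V →ₗ[ℝ] V)
    (hL1 : ∀ x : V, ∑ k, L k x = x) (hL2 : ∀ k x, L k x ∈ E k)
    (u₀ : V) (hu₀ : u₀ ∈ E 0) (hu₀n : ‖u₀‖ = 1)
    (f₀ : V →ₗ[ℝ] ℝ) (hf₀ : ∀ x, L 0 x = f₀ x • u₀)
    (i : ℕ) (hi : i ≤ s)
    (x y : V) (hx : x ≠ 0) (hy : y ≠ 0) (hfx : f₀ x ≠ 0) (hfy : f₀ y ≠ 0) :
    (∃ c : ℝ, c ≠ 0 ∧
        (Submodule.orthogonalProjectionOnto (Vlow E i)ᗮ y : V) =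
          c • (Submodule.orthogonalProjectionOnto (Vlow E i)ᗮ x : V)) ↔
      ∀ k : Fin (s+1), (k : ℕ) ≤ i → (f₀ x)⁻¹ • L k x = (f₀ y)⁻¹ • L k y :=
  stmt8_general s E hE L hL1 hL2 u₀ hu₀n f₀ hf₀ i x y hfx hfy
end

section
/- Let V = E₀ ⊕ ⋯ ⊕ E_s be a direct-sum decomposition of V into nonzero subspaces with s ≥ 1 and dim E₀ = 1, let A be an invertible linear map of V, and set E'_k = A^{-1}E_k for 0 ≤ k ≤ s, so V = E'₀ ⊕ ⋯ ⊕ E'_s is also a splitting with dim E'₀ = 1. Let g (resp. g') denote the coordinate maps of the splitting (E_k) (resp. (E'_k)), with unit vector u₀ ∈ E₀ (resp. u'₀ ∈ E'₀), and let V⁰ = E₁ ⊕ ⋯ ⊕ E_s, V'⁰ = E'₁ ⊕ ⋯ ⊕ E'_s. Fix 1 ≤ i ≤ s and put aⁱ = (min{|Ax| : x ∈ E'_i, |x| = 1}) / |Au'₀|. Then for all x̄, ȳ ∈ P(V) ∖ P(V'⁰) (so that Ax̄, Aȳ ∈ P(V) ∖ P(V⁰)) and every r > 0: if |gⁱ(Ax̄)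 − gⁱ(Aȳ)| ≤ aⁱ · r, then |g'ⁱ(x̄) − g'ⁱ(ȳ)| ≤ r. -/
open scoped RealInnerProductSpace
open Filter

variable {V : Type*} [NormedAddCommGroup V] [InnerProductSpace ℝ V]

lemma aux_sum_eq_zero {n : ℕ} {E : Fin n → Submodule ℝ V} (h : iSupIndep E)
    (v : Fin n → V) (hv : ∀ k, v k ∈ E k) (hsum : ∑ k, v k = 0) (j : Fin n) : v j = 0 := by
  have h2 : v j ∈ ⨆ k ≠ j, E k := by
    have h3 : ∑ k ∈ Finset.univ.erase j, v k + v j = 0 := by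
      rw [Finset.sum_erase_add Finset.univ v (Finset.mem_univ j)]; exact hsum
    have h4 : v j = -∑ k ∈ Finset.univ.erase j, v k := eq_neg_of_add_eq_zero_right h3
    rw [h4]
    exact neg_mem (Submodule.sum_mem _ (fun k hk =>
      Submodule.mem_iSup_of_mem k (Submodule.mem_iSup_of_mem (Finset.ne_of_mem_erase hk) (hv k))))
  exact (h j).le_bot ⟨hv j, h2⟩

/-- Lemma 5.6 of the paper. For a splitting `E` and its pullback
`E'_k = A⁻¹E_k` under an invertible map `A`, with coordinate maps `g`, `g'` and
`aⁱ = min{|Az| : z ∈ E'_i, |z|=1} / |Au'₀|`: if `|gⁱ(Ax̄) − gⁱ(Aȳ)| ≤ aⁱ r` then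
`|g'ⁱ(x̄) − g'ⁱ(ȳ)| ≤ r`. -/
theorem stmt13 [FiniteDimensional ℝ V] (hdim : 2 ≤ Module.finrank ℝ V)
    (s : ℕ) (hs : 1 ≤ s) (E E' : Fin (s+1) → Submodule ℝ V)
    (hE : DirectSum.IsInternal E) (hEne : ∀ k, E k ≠ ⊥)
    (hE0 : Module.finrank ℝ (E 0) = 1)
    (A : V ≃ₗ[ℝ] V) (hE' : ∀ k, E' k = (E k).map ((A.symm : V →ₗ[ℝ] V)))
    (L L' : Fin (s+1) → V →ₗ[ℝ] V)
    (hL1 : ∀ x : V, ∑ k, L k x = x) (hL2 : ∀ k x, L k x ∈ E k)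
    (hL1' : ∀ x : V, ∑ k, L' k x = x) (hL2' : ∀ k x, L' k x ∈ E' k)
    (u₀ u₀' : V) (hu₀ : u₀ ∈ E 0) (hu₀n : ‖u₀‖ = 1)
    (hu₀' : u₀' ∈ E' 0) (hu₀n' : ‖u₀'‖ = 1)
    (f₀ f₀' : V →ₗ[ℝ] ℝ)
    (hf₀ : ∀ x, L 0 x = f₀ x • u₀) (hf₀' : ∀ x, L' 0 x = f₀' x • u₀')
    (i : ℕ) (hi1 : 1 ≤ i) (hi2 : i ≤ s)
    (a : ℝ)
    (ha : a = sInf {c : ℝ | ∃ z : V, z ∈ E' ⟨i, by omega⟩ ∧ ‖z‖ = 1 ∧ c = ‖A z‖} / ‖A u₀'‖)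
    (x y : V) (hx : x ≠ 0) (hy : y ≠ 0) (hfx : f₀' x ≠ 0) (hfy : f₀' y ≠ 0)
    (r : ℝ) (hr : 0 < r)
    (h : ‖(f₀ (A x))⁻¹ • L ⟨i, by omega⟩ (A x) - (f₀ (A y))⁻¹ • L ⟨i, by omega⟩ (A y)‖ ≤ a * r) :
    ‖(f₀' x)⁻¹ • L' ⟨i, by omega⟩ x - (f₀' y)⁻¹ • L' ⟨i, by omega⟩ y‖ ≤ r := by
  set ii : Fin (s+1) := ⟨i, by omega⟩ with hii
  -- Step 1: L' k z = A.symm (L k (A z))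
  have hkey : ∀ (k : Fin (s+1)) (z : V), L' k z = A.symm (L k (A z)) := by
    intro k z
    have hmem : ∀ j : Fin (s+1), A (L' j z) - L j (A z) ∈ E j := by
      intro j
      have h1 : L' j z ∈ (E j).map (A.symm : V →ₗ[ℝ] V) := by rw [← hE']; exact hL2' j z
      obtain ⟨m, hm, hmz⟩ := h1
      have : A (L' j z) = m := by rw [← hmz]; simp
      rw [this]
      exact Submodule.sub_mem _ hm (hL2 j (A z))
    have hsum : ∑ j, (A (L' j z) - L j (A z)) = 0 := by
      rw [Finset.sum_sub_distrib, hL1 (A z), ← map_sum, hL1' z]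
      simp
    have := aux_sum_eq_zero hE.submodule_iSupIndep _ hmem hsum k
    have h5 : A (L' k z) = L k (A z) := by
      have := sub_eq_zero.mp this; exact this
    calc L' k z = A.symm (A (L' k z)) := by simp
    _ = A.symm (L k (A z)) := by rw [h5]
  have hu₀'ne : u₀' ≠ 0 := fun hc => by simp [hc] at hu₀n'
  have hu₀ne : u₀ ≠ 0 := fun hc => by simp [hc] at hu₀n
  -- Step 2: relation between f₀' and f₀ ∘ A
  have hrel : ∀ z : V, f₀' z • u₀' = f₀ (A z) • A.symm u₀ := by
    intro z
    have := hkey 0 z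
    rw [hf₀' z, hf₀ (A z)] at this
    rw [this]; simp
  have hfAx : f₀ (A x) ≠ 0 := by
    intro hc
    have := hrel x; rw [hc, zero_smul, smul_eq_zero] at this
    rcases this with h1 | h1
    · exact hfx h1
    · exact hu₀'ne h1
  have hfAy : f₀ (A y) ≠ 0 := by
    intro hc
    have := hrel y; rw [hc, zero_smul, smul_eq_zero] at this
    rcases this with h1 | h1
    · exact hfy h1
    · exact hu₀'ne h1
  set c : ℝ := f₀' x / f₀ (A x) with hc
  have hcne : c ≠ 0 := div_ne_zero hfx hfAx
  have hAsu : A.symm u₀ = c • u₀' := by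
    have h1 : A.symm u₀ = (f₀ (A x))⁻¹ • (f₀' x • u₀') := by
      rw [hrel x, smul_smul, inv_mul_cancel₀ hfAx, one_smul]
    rw [h1, smul_smul, hc, div_eq_inv_mul]
  -- also c = f₀' y / f₀ (A y)
  have hcy : f₀' y = c * f₀ (A y) := by
    have h1 : f₀' y • u₀' = (c * f₀ (A y)) • u₀' := by
      rw [hrel y, hAsu, smul_smul, mul_comm]
    exact smul_left_injective ℝ hu₀'ne h1
  have hcx : f₀' x = c * f₀ (A x) := by
    rw [hc]; field_simp
  -- Step 3: norm of A u₀'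
  have hAu₀' : A u₀' = c⁻¹ • u₀ := by
    have : u₀ = c • A u₀' := by
      calc u₀ = A (A.symm u₀) := by simp
      _ = A (c • u₀') := by rw [hAsu]
      _ = c • A u₀' := by simp
    rw [this, smul_smul, inv_mul_cancel₀ hcne, one_smul]
  have hAu₀'norm : ‖A u₀'‖ = |c|⁻¹ := by
    rw [hAu₀', norm_smul, hu₀n, mul_one, Real.norm_eq_abs, abs_inv]
  -- Step 4: the infimum m
  set S : Set ℝ := {c : ℝ | ∃ z : V, z ∈ E' ii ∧ ‖z‖ = 1 ∧ c = ‖A z‖} with hS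
  set m : ℝ := sInf S with hm
  have ham : a = m * |c| := by
    rw [ha, hAu₀'norm]
    field_simp
  -- S is nonempty
  have hSne : S.Nonempty := by
    obtain ⟨v, hv, hvne⟩ := Submodule.exists_mem_ne_zero_of_ne_bot (hEne ii)
    have hv' : (A.symm : V →ₗ[ℝ] V) v ∈ E' ii := by rw [hE']; exact ⟨v, hv, rfl⟩
    have hvne' : (A.symm : V →ₗ[ℝ] V) v ≠ 0 := by
      simp only [LinearEquiv.coe_coe]
      intro hc
      apply hvne
      have : A ((A.symm : V ≃ₗ[ℝ] V) v) = A 0 := by rw [hc]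
      simpa using this
    refine ⟨‖A (‖(A.symm : V →ₗ[ℝ] V) v‖⁻¹ • (A.symm : V →ₗ[ℝ] V) v)‖,
      ‖(A.symm : V →ₗ[ℝ] V) v‖⁻¹ • (A.symm : V →ₗ[ℝ] V) v, ?_, ?_, rfl⟩
    · exact Submodule.smul_mem _ _ hv'
    · rw [norm_smul, norm_inv, norm_norm, inv_mul_cancel₀ (norm_ne_zero_iff.mpr hvne')]
  -- S is bounded below by a positive constant
  set B := LinearMap.toContinuousLinearMap (A.symm : V →ₗ[ℝ] V) with hB
  have hBpos : 0 < ‖B‖ := by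
    rcases (norm_nonneg B).lt_or_eq with h1 | h1
    · exact h1
    · exfalso
      have hB0 : B = 0 := by rwa [eq_comm, norm_eq_zero] at h1
      have : (A.symm : V →ₗ[ℝ] V) u₀ = 0 := by
        have : B u₀ = 0 := by rw [hB0]; rfl
        exact this
      apply hu₀ne
      have h2 : A ((A.symm : V ≃ₗ[ℝ] V) u₀) = A 0 := by
        simp only [LinearEquiv.coe_coe] at this
        rw [this]
      simpa using h2
  have hlb : ∀ t ∈ S, ‖B‖⁻¹ ≤ t := by
    rintro t ⟨z, hz, hzn, rfl⟩
    have h1 : ‖B (A z)‖ ≤ ‖B‖ * ‖A z‖ := B.le_opNorm _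
    have h2 : B (A z) = z := by
      show (A.symm : V →ₗ[ℝ] V) (A z) = z
      simp
    rw [h2, hzn] at h1
    rw [inv_eq_one_div, div_le_iff₀ hBpos]
    nlinarith
  have hbdd : BddBelow S := ⟨‖B‖⁻¹, hlb⟩
  have hmpos : 0 < m := lt_of_lt_of_le (inv_pos.mpr hBpos) (le_csInf hSne hlb)
  -- Step 5: the main computation
  set Δ : V := (f₀ (A x))⁻¹ • L ii (A x) - (f₀ (A y))⁻¹ • L ii (A y) with hΔ
  set w : V := A.symm Δ with hw
  have hwE : w ∈ E' ii := by
    rw [hE']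
    exact ⟨Δ, Submodule.sub_mem _ (Submodule.smul_mem _ _ (hL2 ii (A x)))
      (Submodule.smul_mem _ _ (hL2 ii (A y))), rfl⟩
  have hAw : A w = Δ := by rw [hw]; simp
  have hLHS : (f₀' x)⁻¹ • L' ii x - (f₀' y)⁻¹ • L' ii y = c⁻¹ • w := by
    rw [hw, hΔ, hkey ii x, hkey ii y, hcx, hcy]
    rw [map_sub, map_smul, map_smul, smul_sub, smul_smul, smul_smul, mul_inv, mul_inv]
  rw [hLHS, norm_smul, Real.norm_eq_abs, abs_inv]
  by_cases hw0 : w = 0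
  · rw [hw0, norm_zero, mul_zero]; exact le_of_lt hr
  · have hwpos : 0 < ‖w‖ := norm_pos_iff.mpr hw0
    have hmle : m ≤ ‖w‖⁻¹ * ‖Δ‖ := by
      have hmem : ‖A (‖w‖⁻¹ • w)‖ ∈ S := ⟨‖w‖⁻¹ • w, Submodule.smul_mem _ _ hwE,
        by rw [norm_smul, norm_inv, norm_norm, inv_mul_cancel₀ (ne_of_gt hwpos)], rfl⟩
      have h2 : ‖A (‖w‖⁻¹ • w)‖ = ‖w‖⁻¹ * ‖Δ‖ := by
        rw [map_smul, norm_smul, norm_inv, norm_norm, hAw]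
      rw [← h2]
      exact csInf_le hbdd hmem
    have hΔle : ‖Δ‖ ≤ a * r := h
    have h3 : m * ‖w‖ ≤ ‖Δ‖ := by
      calc m * ‖w‖ ≤ (‖w‖⁻¹ * ‖Δ‖) * ‖w‖ := mul_le_mul_of_nonneg_right hmle (le_of_lt hwpos)
      _ = ‖Δ‖ := by field_simp
    have h4 : ‖w‖ ≤ |c| * r := by
      have : m * ‖w‖ ≤ m * |c| * r := le_trans h3 (by rw [← ham]; exact hΔle)
      nlinarith
    have hcabs : 0 < |c| := abs_pos.mpr hcne
    calc |c|⁻¹ * ‖w‖ ≤ |c|⁻¹ * (|c| * r) := by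
          apply mul_le_mul_of_nonneg_left h4 (le_of_lt (inv_pos.mpr hcabs))
    _ = r := by field_simp
end

section
/- Let (X, B, ρ) be a standard Borel probability space, T : X → X an invertible measure-preserving Borel automorphism, 𝒫 a finite measurable partition of X, ξ a measurable partition of X, and n ≥ 1. Write 𝒫₀^{n-1}(x) for the atom of ⋁_{j=0}^{n-1} T^{-j}𝒫 containing x, and suppose that for every x ∈ X, T^{-n}(ξ(Tⁿx)) = ξ(x) ∩ 𝒫₀^{n-1}(x). Then for ρ-a.e. x, for every Borel set F ⊆ X: ρ_x^ξ(T^{-n}F ∩ 𝒫₀^{n-1}(x)) = ρ_{Tⁿx}^ξ(F) · ρ_x^ξ(𝒫₀^{n-1}(x)). -/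
/-!
Write `σ = Tⁿ` and `B = 𝒫₀^{n-1}(x)`. The compatibility hypothesis says that `σ` maps `ξ`-saturated
sets to `ξ`-saturated sets and that `B` is measurable for `σ⁻¹ξ̂`, a σ-algebra containing `ξ̂`.
Conditioning `1_{σ⁻¹F ∩ B}` first on `σ⁻¹ξ̂` gives `1_B · (E[1_F | ξ̂] ∘ σ)`, because conditional
expectation commutes with the measure-preserving map `σ`. Conditioning further on `ξ̂` and reading
both sides through the conditional measures: `ρ_x`-almost every `z ∈ B` lies in `ξ(x)`, so
`σ z ∈ ξ(σ x)` and `E[1_F | ξ̂](σ z) = ρ_{σx}(F)`. This gives the identity for each `F` and each of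
the finitely many atoms `B` off a null set of `x`; a countable generating π-system then handles all
Borel `F` at once.
-/

open MeasureTheory Filter

namespace MeasurableEquiv

variable {X : Type*} [MeasurableSpace X]

def iterate (T : X ≃ᵐ X) : ℕ → X ≃ᵐ X
  | 0 => MeasurableEquiv.refl X
  | n + 1 => T.trans (T.iterate n)

@[simp]
theorem coe_iterate (T : X ≃ᵐ X) (n : ℕ) : ⇑(T.iterate n) = (⇑T)^[n] := by
  induction n with
  | zero => rfl
  | succ n ih => simp only [iterate, coe_trans, ih, Function.iterate_succ]

end MeasurableEquiv

theorem MeasureTheory.MeasurePreserving.condExp_comp_ae_eq {α β : Type*} {mα : MeasurableSpace α} {m mβ : MeasurableSpace β}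
    {μ : Measure α} {ν : Measure β} [IsFiniteMeasure μ] {σ : α → β}
    (hσ : MeasurePreserving σ μ ν) (hm : m ≤ mβ) {f : β → ℝ} (hf : Integrable f ν) :
    μ[f ∘ σ | m.comap σ] =ᵐ[μ] ν[f | m] ∘ σ := by
  have : IsFiniteMeasure ν := hσ.map_eq ▸ inferInstance
  have hcomap : m.comap σ ≤ mα := (MeasurableSpace.comap_mono hm).trans hσ.measurable.comap_le
  have hg : StronglyMeasurable[m] (ν[f | m]) := stronglyMeasurable_condExp
  refine (ae_eq_condExp_of_forall_setIntegral_eq hcomap (hσ.integrable_comp_of_integrable hf)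
    (fun s _ _ => ?_) ?_ ?_).symm
  · exact (hσ.integrable_comp_of_integrable integrable_condExp).integrableOn
  · rintro _ ⟨S, hS, rfl⟩ _
    have hSm : MeasurableSet S := hm S hS
    have hmap : ∀ u : β → ℝ, AEStronglyMeasurable u ν →
        ∫ x in σ ⁻¹' S, u (σ x) ∂μ = ∫ y in S, u y ∂ν := fun u hu => by
      rw [← hσ.map_eq] at hu ⊢
      exact (setIntegral_map hSm hu hσ.aemeasurable).symm
    simp only [Function.comp_apply]
    rw [hmap _ (hg.mono hm).aestronglyMeasurable, hmap _ hf.aestronglyMeasurable,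
      setIntegral_condExp hm hf hS]
  · exact (hg.comp_measurable (measurable_iff_comap_le.2 le_rfl)).aestronglyMeasurable

section JoinAtom

variable {X ι : Type*} (T : X → X) (P : ι → Set X) (n : ℕ)

def joinAtom (x : X) : Set X := {z | ∀ j < n, ∀ i, T^[j] x ∈ P i → T^[j] z ∈ P i}

variable {T P n}

theorem mem_joinAtom_self (x : X) : x ∈ joinAtom T P n x := fun _ _ _ h => h

theorem joinAtom_eq_of_mem (hPd : Pairwise (Function.onFun Disjoint P))
    (hPu : (⋃ i, P i) = Set.univ) {x y : X} (hy : y ∈ joinAtom T P n x) :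
    joinAtom T P n y = joinAtom T P n x := by
  ext z
  refine ⟨fun hz j hj i hi => hz j hj i (hy j hj i hi), fun hz j hj i hi => ?_⟩
  obtain ⟨k, hk⟩ := Set.mem_iUnion.1 (hPu.symm ▸ Set.mem_univ (T^[j] x))
  obtain rfl : i = k := by
    by_contra hik
    exact Set.disjoint_left.1 (hPd hik) hi (hy j hj k hk)
  exact hz j hj i hk

theorem measurableSet_joinAtom [MeasurableSpace X] [Countable ι] (hT : Measurable T)
    (hPm : ∀ i, MeasurableSet (P i)) (x : X) : MeasurableSet (joinAtom T P n x) := by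
  have : joinAtom T P n x = ⋂ j ∈ {j | j < n}, ⋂ i ∈ {i | T^[j] x ∈ P i}, T^[j] ⁻¹' P i := by
    ext z
    simp [joinAtom]
  rw [this]
  exact .biInter (Set.to_countable _) fun j _ =>
    .biInter (Set.to_countable _) fun i _ => hT.iterate j (hPm i)

theorem finite_range_joinAtom [Finite ι] : (Set.range (joinAtom T P n)).Finite := by
  let ofWord : (Fin n → ι → Prop) → Set X := fun w => {z | ∀ j : Fin n, ∀ i, w j i → T^[j] z ∈ P i}
  refine (Set.finite_range ofWord).subset ?_
  rintro _ ⟨x, rfl⟩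
  refine ⟨fun j i => T^[j] x ∈ P i, ?_⟩
  ext z
  exact ⟨fun hz j hj i hi => hz ⟨j, hj⟩ i hi, fun hz j i hi => hz j j.isLt i hi⟩

end JoinAtom

section PiSystem

variable {X : Type*} [mX : MeasurableSpace X]

theorem exists_countable_isPiSystem_generateFrom [MeasurableSpace.CountablyGenerated X] :
    ∃ C : Set (Set X), C.Countable ∧ IsPiSystem C ∧ mX = MeasurableSpace.generateFrom C := by
  set S := MeasurableSpace.countableGeneratingSet X
  refine ⟨Set.sInter '' {t | t.Finite ∧ t ⊆ S},
    (Set.countable_ofPred_finite_subset MeasurableSpace.countable_countableGeneratingSet).image _,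
    ?_, le_antisymm ?_ ?_⟩
  · rintro _ ⟨t₁, ⟨ht₁, hS₁⟩, rfl⟩ _ ⟨t₂, ⟨ht₂, hS₂⟩, rfl⟩ _
    exact ⟨t₁ ∪ t₂, ⟨ht₁.union ht₂, Set.union_subset hS₁ hS₂⟩, Set.sInter_union t₁ t₂⟩
  · conv_lhs => rw [← MeasurableSpace.generateFrom_countableGeneratingSet (α := X)]
    refine MeasurableSpace.generateFrom_mono fun s hs => ⟨{s}, ⟨Set.finite_singleton s, ?_⟩, ?_⟩
    · simpa using hs
    · simp
  · refine MeasurableSpace.generateFrom_le ?_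
    rintro _ ⟨t, ⟨ht, hS⟩, rfl⟩
    exact ht.measurableSet_sInter fun s hs =>
      MeasurableSpace.measurableSet_countableGeneratingSet (hS hs)

theorem measure_preimage_inter_eq_mul_of_isPiSystem {Y : Type*} [MeasurableSpace Y] {μ : Measure Y}
    [IsFiniteMeasure μ] {ν : Measure X} [IsProbabilityMeasure ν] {σ : Y → X} (hσ : Measurable σ)
    {C : Set (Set X)} (hC : IsPiSystem C) (hgen : mX = MeasurableSpace.generateFrom C) {A : Set Y}
    (h : ∀ F ∈ C, μ (σ ⁻¹' F ∩ A) = ν F * μ A) {F : Set X} (hF : MeasurableSet F) :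
    μ (σ ⁻¹' F ∩ A) = ν F * μ A := by
  have hmap : (μ.restrict A).map σ = μ A • ν := by
    refine ext_of_generate_finite C hgen hC (fun F' hF' => ?_) ?_
    · rw [Measure.map_apply hσ (hgen ▸ MeasurableSpace.measurableSet_generateFrom hF'),
        Measure.restrict_apply (hσ (hgen ▸ MeasurableSpace.measurableSet_generateFrom hF')),
        h F' hF', Measure.smul_apply, smul_eq_mul, mul_comm]
    · rw [Measure.map_apply hσ .univ, Measure.restrict_apply (hσ .univ), Set.preimage_univ,
        Set.univ_inter, Measure.smul_apply, measure_univ, smul_eq_mul, mul_one]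
  rw [← Measure.restrict_apply (hσ hF), ← Measure.map_apply hσ hF, hmap, Measure.smul_apply,
    smul_eq_mul, mul_comm]

end PiSystem

section ConditionalMeasures

variable {X ι : Type*} {m : MeasurableSpace X} [mX : MeasurableSpace X]

variable (m) in
def IsCondMeasureFamily (ρ : Measure X) (ρx : X → Measure X) : Prop :=
  ∀ f : X → ℝ, Integrable f ρ → ∀ᵐ x ∂ρ, ∫ z, f z ∂(ρx x) = ρ[f | m] x

variable {ρ : Measure X} [IsFiniteMeasure ρ] {ρx : X → Measure X} {ζ : X → Set X} {σ : X ≃ᵐ X}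

theorem IsCondMeasureFamily.ae_measureReal_eq (hρx : IsCondMeasureFamily m ρ ρx) {s : Set X}
    (hs : MeasurableSet s) : (fun x => (ρx x).real s) =ᵐ[ρ] ρ[s.indicator 1 | m] := by
  filter_upwards [hρx (s.indicator 1) ((integrable_const (1 : ℝ)).indicator hs)] with x hx
  rw [← hx, integral_indicator_one hs]

theorem IsCondMeasureFamily.ae_ae_of_ae [∀ x, IsFiniteMeasure (ρx x)]
    (hρx : IsCondMeasureFamily m ρ ρx) {p : X → Prop} (hp : ∀ᵐ z ∂ρ, p z) :
    ∀ᵐ x ∂ρ, ∀ᵐ z ∂(ρx x), p z := by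
  obtain ⟨N, hpN, hN, hρN⟩ := exists_measurable_superset_of_null (ae_iff.1 hp)
  have hcond : ρ[N.indicator (1 : X → ℝ) | m] =ᵐ[ρ] 0 := by
    refine (condExp_congr_ae ?_).trans (condExp_zero (m := m) (μ := ρ)).eventuallyEq
    filter_upwards [measure_eq_zero_iff_ae_notMem.1 hρN] with z hz
    simp [hz]
  filter_upwards [hρx.ae_measureReal_eq hN, hcond] with x hx hx0
  refine measure_mono_null hpN ?_
  rwa [hx0, Pi.zero_apply, measureReal_eq_zero_iff] at hx

theorem measurableSet_comap_of_preimage_atom_subset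
    (hm : ∀ A : Set X, MeasurableSet[m] A ↔ (MeasurableSet A ∧ ∀ x ∈ A, ζ x ⊆ A))
    (σ : X ≃ᵐ X) {S : Set X} (hS : MeasurableSet S)
    (hσS : ∀ x ∈ S, σ ⁻¹' ζ (σ x) ⊆ S) : MeasurableSet[m.comap σ] S := by
  refine ⟨σ '' S, (hm _).2 ⟨σ.measurableSet_image.2 hS, ?_⟩, σ.preimage_image S⟩
  rintro _ ⟨x, hx, rfl⟩ u hu
  exact ⟨σ.symm u, hσS x hx (by simpa using hu), σ.apply_symm_apply u⟩

theorem le_comap_of_preimage_atom_subset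
    (hm : ∀ A : Set X, MeasurableSet[m] A ↔ (MeasurableSet A ∧ ∀ x ∈ A, ζ x ⊆ A))
    (σ : X ≃ᵐ X) (hσζ : ∀ x, σ ⁻¹' ζ (σ x) ⊆ ζ x) :
    m ≤ m.comap σ := fun S hS =>
  measurableSet_comap_of_preimage_atom_subset hm σ ((hm S).1 hS).1
    fun x hx => (hσζ x).trans (((hm S).1 hS).2 x hx)

theorem condExp_indicator_preimage_inter_ae_eq (hσ : MeasurePreserving σ ρ ρ)
    (hm : ∀ A : Set X, MeasurableSet[m] A ↔ (MeasurableSet A ∧ ∀ x ∈ A, ζ x ⊆ A))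
    (hσζ : ∀ x, σ ⁻¹' ζ (σ x) ⊆ ζ x) {A : Set X} (hA : MeasurableSet A)
    (hσA : ∀ x ∈ A, σ ⁻¹' ζ (σ x) ⊆ A) {F : Set X} (hF : MeasurableSet F) :
    ρ[(σ ⁻¹' F ∩ A).indicator (1 : X → ℝ) | m] =ᵐ[ρ]
      ρ[A.indicator (ρ[F.indicator 1 | m] ∘ σ) | m] := by
  have hmX : m ≤ mX := fun S hS => ((hm S).1 hS).1
  have hcomap : m.comap σ ≤ mX := (MeasurableSpace.comap_mono hmX).trans σ.measurable.comap_le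
  have hF1 : Integrable (F.indicator (1 : X → ℝ)) ρ := (integrable_const 1).indicator hF
  have hsplit : (σ ⁻¹' F ∩ A).indicator (1 : X → ℝ) = A.indicator (F.indicator 1 ∘ σ) := by
    rw [Set.inter_comm, ← Set.indicator_indicator]
    rfl
  calc ρ[(σ ⁻¹' F ∩ A).indicator (1 : X → ℝ) | m]
      =ᵐ[ρ] ρ[ρ[A.indicator (F.indicator 1 ∘ σ) | m.comap σ] | m] := by
        rw [hsplit]
        exact (condExp_condExp_of_le (le_comap_of_preimage_atom_subset hm σ hσζ) hcomap).symm
    _ =ᵐ[ρ] ρ[A.indicator (ρ[F.indicator 1 ∘ σ | m.comap σ]) | m] :=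
        condExp_congr_ae (condExp_indicator (hσ.integrable_comp_of_integrable hF1)
          (measurableSet_comap_of_preimage_atom_subset hm σ hA hσA))
    _ =ᵐ[ρ] ρ[A.indicator (ρ[F.indicator 1 | m] ∘ σ) | m] := by
        refine condExp_congr_ae ?_
        filter_upwards [hσ.condExp_comp_ae_eq hmX hF1] with z hz
        simp only [Set.indicator, hz]

theorem ae_measure_preimage_inter_eq_mul [∀ x, IsProbabilityMeasure (ρx x)]
    (hσ : MeasurePreserving σ ρ ρ)
    (hm : ∀ A : Set X, MeasurableSet[m] A ↔ (MeasurableSet A ∧ ∀ x ∈ A, ζ x ⊆ A))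
    (hρx : IsCondMeasureFamily m ρ ρx) (hρxζ : ∀ x, ∀ᵐ z ∂(ρx x), z ∈ ζ x)
    (hρx_eq : ∀ x, ∀ y ∈ ζ x, ρx y = ρx x) (hσζ : ∀ x, σ ⁻¹' ζ (σ x) ⊆ ζ x)
    {A : Set X} (hA : MeasurableSet A) (hσA : ∀ x ∈ A, σ ⁻¹' ζ (σ x) = ζ x ∩ A)
    {F : Set X} (hF : MeasurableSet F) :
    ∀ᵐ x ∂ρ, x ∈ A → ρx x (σ ⁻¹' F ∩ A) = ρx (σ x) F * ρx x A := by
  set g := ρ[F.indicator (1 : X → ℝ) | m]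
  have hFA : MeasurableSet (σ ⁻¹' F ∩ A) := (σ.measurable hF).inter hA
  have hg : ∀ᵐ z ∂ρ, g (σ z) = (ρx (σ z)).real F :=
    hσ.quasiMeasurePreserving.ae_eq_comp (hρx.ae_measureReal_eq hF).symm
  filter_upwards [hρx.ae_measureReal_eq hFA,
    hρx _ ((hσ.integrable_comp_of_integrable integrable_condExp).indicator hA),
    condExp_indicator_preimage_inter_ae_eq hσ hm hσζ hA (fun x hx => (hσA x hx).trans_subset
      Set.inter_subset_right) hF, hρx.ae_ae_of_ae hg] with x hFAx hAx hcond hgx hxA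
  have hconst : A.indicator (g ∘ σ) =ᵐ[ρx x] A.indicator fun _ => (ρx (σ x)).real F := by
    filter_upwards [hgx, hρxζ x] with z hgz hzζ
    by_cases hzA : z ∈ A
    · have hσz : σ z ∈ ζ (σ x) := ((hσA x hxA).symm ▸ ⟨hzζ, hzA⟩ : z ∈ σ ⁻¹' ζ (σ x))
      simp only [Set.indicator_of_mem hzA, Function.comp_apply, hgz, hρx_eq _ _ hσz]
    · simp only [Set.indicator_of_notMem hzA]
  have hreal : (ρx x).real (σ ⁻¹' F ∩ A) = (ρx (σ x)).real F * (ρx x).real A := by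
    rw [hFAx, hcond, ← hAx, integral_congr_ae hconst, integral_indicator_const _ hA, smul_eq_mul,
      mul_comm]
  rw [measureReal_def, measureReal_def, measureReal_def, ← ENNReal.toReal_mul] at hreal
  exact (ENNReal.toReal_eq_toReal_iff' (measure_ne_top _ _)
    (ENNReal.mul_ne_top (measure_ne_top _ _) (measure_ne_top _ _))).1 hreal

theorem ae_measure_preimage_inter_joinAtom_eq_mul [MeasurableSpace.CountablyGenerated X]
    {T : X ≃ᵐ X} (hT : MeasurePreserving T ρ ρ) [Finite ι]
    {P : ι → Set X} (hPm : ∀ i, MeasurableSet (P i)) (hPd : Pairwise (Function.onFun Disjoint P))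
    (hPu : (⋃ i, P i) = Set.univ)
    (hm : ∀ A : Set X, MeasurableSet[m] A ↔ (MeasurableSet A ∧ ∀ x ∈ A, ζ x ⊆ A))
    [∀ x, IsProbabilityMeasure (ρx x)] (hρx : IsCondMeasureFamily m ρ ρx)
    (hρxζ : ∀ x, ∀ᵐ z ∂(ρx x), z ∈ ζ x) (hρx_eq : ∀ x, ∀ y ∈ ζ x, ρx y = ρx x) {n : ℕ}
    (hcompat : ∀ x, (⇑T)^[n] ⁻¹' ζ ((⇑T)^[n] x) = ζ x ∩ joinAtom T P n x) :
    ∀ᵐ x ∂ρ, ∀ F, MeasurableSet F →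
      ρx x ((⇑T)^[n] ⁻¹' F ∩ joinAtom T P n x) =
        ρx ((⇑T)^[n] x) F * ρx x (joinAtom T P n x) := by
  set σ := T.iterate n
  have hσ : MeasurePreserving σ ρ ρ := by simpa [σ] using hT.iterate n
  have hσA : ∀ x, ∀ y ∈ joinAtom T P n x, σ ⁻¹' ζ (σ y) = ζ y ∩ joinAtom T P n x :=
    fun x y hy => by rw [T.coe_iterate, hcompat y, joinAtom_eq_of_mem hPd hPu hy]
  have hσζ : ∀ x, σ ⁻¹' ζ (σ x) ⊆ ζ x := fun x =>
    (hσA x x (mem_joinAtom_self x)).trans_subset Set.inter_subset_left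
  obtain ⟨C, hCc, hCpi, hgen⟩ := exists_countable_isPiSystem_generateFrom (X := X)
  have key : ∀ᵐ x ∂ρ, ∀ A ∈ Set.range (joinAtom T P n), ∀ F ∈ C, x ∈ A →
      ρx x (σ ⁻¹' F ∩ A) = ρx (σ x) F * ρx x A := by
    rw [ae_ball_iff finite_range_joinAtom.countable]
    rintro _ ⟨y, rfl⟩
    rw [ae_ball_iff hCc]
    exact fun F hF => ae_measure_preimage_inter_eq_mul hσ hm hρx hρxζ hρx_eq hσζ
      (measurableSet_joinAtom T.measurable hPm y) (hσA y)
      (hgen ▸ MeasurableSpace.measurableSet_generateFrom hF)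
  filter_upwards [key] with x hx F hF
  rw [← T.coe_iterate n]
  exact measure_preimage_inter_eq_mul_of_isPiSystem σ.measurable hCpi hgen
    (fun F' hF' => hx _ ⟨x, rfl⟩ F' hF' (mem_joinAtom_self x)) hF

end ConditionalMeasures

theorem stmt16_general {X : Type*} [mX : MeasurableSpace X] [StandardBorelSpace X]
    (ρ : Measure X) [IsProbabilityMeasure ρ]
    (T : X ≃ᵐ X) (hT : MeasurePreserving (⇑T) ρ ρ)
    -- the finite measurable partition 𝒫
    {ι : Type*} [Fintype ι] (P : ι → Set X)
    (hPm : ∀ i, MeasurableSet (P i))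
    (hPd : Pairwise (Function.onFun Disjoint P))
    (hPu : (⋃ i, P i) = Set.univ)
    -- the measurable partition ξ, given by its atom map ζ
    (ζ : X → Set X)
    (hζpart : ∀ x y, y ∈ ζ x → ζ y = ζ x)
    (hζmeas : ∃ G : ℕ → Set X, (∀ k, MeasurableSet (G k)) ∧ ∀ x,
      ζ x = (⋂ k ∈ {k | x ∈ G k}, G k) ∩ ⋂ k ∈ {k | x ∉ G k}, (G k)ᶜ)
    -- the σ-algebra ξ̂ of measurable ξ-saturated sets
    (m : MeasurableSpace X)
    (hm : ∀ A : Set X, MeasurableSet[m] A ↔ (MeasurableSet[mX] A ∧ ∀ x ∈ A, ζ x ⊆ A))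
    -- the disintegration of ρ with respect to ξ
    (ρx : X → @Measure X mX) (hρxprob : ∀ x, IsProbabilityMeasure (ρx x))
    (hρx1 : ∀ x, ρx x (ζ x) = 1)
    (hρx2 : ∀ x y, ζ x = ζ y → ρx x = ρx y)
    (hρx3 : ∀ f : X → ℝ, Integrable f ρ → ∀ᵐ x ∂ρ, ∫ z, f z ∂(ρx x) = (ρ[f|m]) x)
    -- the compatibility hypothesis with the dynamics
    (n : ℕ)
    (hcompat : ∀ x : X, (⇑T)^[n] ⁻¹' ζ ((⇑T)^[n] x) =
      ζ x ∩ {z | ∀ j < n, ∀ i, (⇑T)^[j] x ∈ P i → (⇑T)^[j] z ∈ P i}) :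
    ∀ᵐ x ∂ρ, ∀ F : Set X, MeasurableSet[mX] F →
      ρx x ((⇑T)^[n] ⁻¹' F ∩ {z | ∀ j < n, ∀ i, (⇑T)^[j] x ∈ P i → (⇑T)^[j] z ∈ P i}) =
        ρx ((⇑T)^[n] x) F *
          ρx x {z | ∀ j < n, ∀ i, (⇑T)^[j] x ∈ P i → (⇑T)^[j] z ∈ P i} := by
  obtain ⟨G, hG, hζG⟩ := hζmeas
  have hζm : ∀ x, MeasurableSet[mX] (ζ x) := fun x => by
    rw [hζG x]
    exact (MeasurableSet.biInter (Set.to_countable _) fun k _ => hG k).inter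
      (MeasurableSet.biInter (Set.to_countable _) fun k _ => (hG k).compl)
  have hρxζ : ∀ x, ∀ᵐ z ∂(ρx x), z ∈ ζ x := fun x =>
    (ae_iff_measure_eq (hζm x).nullMeasurableSet).2 (by
      change ρx x (ζ x) = ρx x Set.univ
      rw [hρx1, measure_univ])
  exact ae_measure_preimage_inter_joinAtom_eq_mul (mX := mX) hT hPm hPd hPu hm hρx3 hρxζ
    (fun x y hy => hρx2 y x (hζpart x y hy)) hcompat

/-- Lemma 4.8 of the paper. Let `ζ` be a measurable partition (given by
its atom map), `m = ζ̂` the σ-algebra of measurable `ζ`-saturated sets, and `{ρx x}` the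
disintegration of `ρ` with respect to `ζ`. If `T⁻ⁿ(ζ(Tⁿx)) = ζ(x) ∩ 𝒫₀^{n-1}(x)` for all
`x`, then for `ρ`-a.e. `x` and every Borel `F`:
`ρ_x^ζ(T⁻ⁿF ∩ 𝒫₀^{n-1}(x)) = ρ_{Tⁿx}^ζ(F) · ρ_x^ζ(𝒫₀^{n-1}(x))`. -/
theorem stmt16 {X : Type*} [mX : MeasurableSpace X] [StandardBorelSpace X]
    (ρ : Measure X) [IsProbabilityMeasure ρ]
    (T : X ≃ᵐ X) (hT : MeasurePreserving (⇑T) ρ ρ)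
    -- the finite measurable partition 𝒫
    {ι : Type*} [Fintype ι] (P : ι → Set X)
    (hPm : ∀ i, MeasurableSet (P i))
    (hPd : Pairwise (Function.onFun Disjoint P))
    (hPu : (⋃ i, P i) = Set.univ)
    -- the measurable partition ξ, given by its atom map ζ
    (ζ : X → Set X) (hζself : ∀ x, x ∈ ζ x)
    (hζpart : ∀ x y, y ∈ ζ x → ζ y = ζ x)
    (hζmeas : ∃ G : ℕ → Set X, (∀ k, MeasurableSet (G k)) ∧ ∀ x,
      ζ x = (⋂ k ∈ {k | x ∈ G k}, G k) ∩ ⋂ k ∈ {k | x ∉ G k}, (G k)ᶜ)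
    -- the σ-algebra ξ̂ of measurable ξ-saturated sets
    (m : MeasurableSpace X)
    (hm : ∀ A : Set X, MeasurableSet[m] A ↔ (MeasurableSet[mX] A ∧ ∀ x ∈ A, ζ x ⊆ A))
    -- the disintegration of ρ with respect to ξ
    (ρx : X → @Measure X mX) (hρxprob : ∀ x, IsProbabilityMeasure (ρx x))
    (hρx1 : ∀ x, ρx x (ζ x) = 1)
    (hρx2 : ∀ x y, ζ x = ζ y → ρx x = ρx y)
    (hρx3 : ∀ f : X → ℝ, Integrable f ρ → ∀ᵐ x ∂ρ, ∫ z, f z ∂(ρx x) = (ρ[f|m]) x)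
    -- the compatibility hypothesis with the dynamics
    (n : ℕ) (hn : 1 ≤ n)
    (hcompat : ∀ x : X, (⇑T)^[n] ⁻¹' ζ ((⇑T)^[n] x) =
      ζ x ∩ {z | ∀ j < n, ∀ i, (⇑T)^[j] x ∈ P i → (⇑T)^[j] z ∈ P i}) :
    ∀ᵐ x ∂ρ, ∀ F : Set X, MeasurableSet[mX] F →
      ρx x ((⇑T)^[n] ⁻¹' F ∩ {z | ∀ j < n, ∀ i, (⇑T)^[j] x ∈ P i → (⇑T)^[j] z ∈ P i}) =
        ρx ((⇑T)^[n] x) F *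
          ρx x {z | ∀ j < n, ∀ i, (⇑T)^[j] x ∈ P i → (⇑T)^[j] z ∈ P i} :=
  stmt16_general (mX := mX) ρ T hT P hPm hPd hPu ζ hζpart hζmeas m hm ρx hρxprob hρx1 hρx2 hρx3 n
    hcompat
end
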